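/- arXiv:0802.2827 — 5 statements merged into one kernel-verified Lean document; each statement's English description precedes it below -/
import Mathlib

section
/- Subset rule correctness: Let S be a finite collection of finite sets and let S₁, S₂ ∈ S with S₁ ⊆ S₂ and S₁ ≠ S₂. Then the minimum cardinality of a set cover of S (covering the universe ⋃ S) equals the minimum cardinality of a set cover of S \ {S₁} (covering the same universe). -/
/-- Subset rule correctness: if `S₁ ⊆ S₂` are distinct members of `S`, the minimum set
cover size of `S` equals that of `S \ {S₁}` (with the same universe `⋃ S`). -/
theorem stmt_1 {α : Type*} [DecidableEq α] (S : Finset (Finset α))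
    (S₁ S₂ : Finset α) (h₁ : S₁ ∈ S) (h₂ : S₂ ∈ S) (hsub : S₁ ⊆ S₂) (hne : S₁ ≠ S₂) :
    sInf {n : ℕ | ∃ C ⊆ S, C.biUnion id = S.biUnion id ∧ C.card = n} =
      sInf {n : ℕ | ∃ C ⊆ S.erase S₁, C.biUnion id = S.biUnion id ∧ C.card = n} := by
  apply le_antisymm
  · -- every cover avoiding S₁ is a cover, so left inf ≤ right inf
    have hne' : {n : ℕ | ∃ C ⊆ S.erase S₁, C.biUnion id = S.biUnion id ∧ C.card = n}.Nonempty := by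
      refine ⟨(S.erase S₁).card, S.erase S₁, le_refl _, ?_, rfl⟩
      apply subset_antisymm
      · exact Finset.biUnion_subset_biUnion_of_subset_left _ (Finset.erase_subset _ _)
      · intro x hx
        simp only [Finset.mem_biUnion, id] at hx ⊢
        obtain ⟨T, hT, hxT⟩ := hx
        by_cases hTS : T = S₁
        · exact ⟨S₂, Finset.mem_erase.2 ⟨fun h => hne h.symm, h₂⟩, hsub (hTS ▸ hxT)⟩
        · exact ⟨T, Finset.mem_erase.2 ⟨hTS, hT⟩, hxT⟩
    obtain ⟨C, hC, hcov, hcard⟩ := Nat.sInf_mem hne'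
    rw [← hcard]
    exact Nat.sInf_le ⟨C, hC.trans (Finset.erase_subset _ _), hcov, rfl⟩
  · -- from a cover C of S, build a cover avoiding S₁ of card ≤ |C|
    have hne0 : {n : ℕ | ∃ C ⊆ S, C.biUnion id = S.biUnion id ∧ C.card = n}.Nonempty :=
      ⟨S.card, S, le_refl _, rfl, rfl⟩
    obtain ⟨C, hC, hcov, hcard⟩ := Nat.sInf_mem hne0
    rw [← hcard]
    by_cases hS₁ : S₁ ∈ C
    · set C' := insert S₂ (C.erase S₁) with hC'
      have hsubC' : C' ⊆ S.erase S₁ := by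
        intro T hT
        rcases Finset.mem_insert.1 hT with rfl | hT
        · exact Finset.mem_erase.2 ⟨fun h => hne h.symm, h₂⟩
        · exact Finset.mem_erase.2 ⟨(Finset.mem_erase.1 hT).1, hC (Finset.mem_erase.1 hT).2⟩
      have hcovC' : C'.biUnion id = S.biUnion id := by
        apply subset_antisymm
        · calc C'.biUnion id ⊆ (S.erase S₁).biUnion id :=
                Finset.biUnion_subset_biUnion_of_subset_left _ hsubC'
            _ ⊆ S.biUnion id :=
                Finset.biUnion_subset_biUnion_of_subset_left _ (Finset.erase_subset _ _)
        · intro x hx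
          rw [← hcov] at hx
          simp only [Finset.mem_biUnion, id] at hx ⊢
          obtain ⟨T, hT, hxT⟩ := hx
          by_cases hTS : T = S₁
          · exact ⟨S₂, Finset.mem_insert_self _ _, hsub (hTS ▸ hxT)⟩
          · exact ⟨T, Finset.mem_insert_of_mem (Finset.mem_erase.2 ⟨hTS, hT⟩), hxT⟩
      have hcardC' : C'.card ≤ C.card := by
        calc C'.card ≤ (C.erase S₁).card + 1 := Finset.card_insert_le _ _
          _ = C.card := by rw [Finset.card_erase_of_mem hS₁]; have := Finset.card_pos.2 ⟨S₁, hS₁⟩; omega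
      exact le_trans (Nat.sInf_le ⟨C', hsubC', hcovC', rfl⟩) hcardC'
    · refine Nat.sInf_le ⟨C, ?_, hcov, rfl⟩
      intro T hT
      exact Finset.mem_erase.2 ⟨fun h => hS₁ (h ▸ hT), hC hT⟩
end

section
/- Subsumption rule correctness: Let S be a finite collection of finite sets with universe U, and let e, e' ∈ U with e ≠ e' such that every set containing e' also contains e (i.e., S(e') ⊆ S(e)). Then C ⊆ S is a set cover of S if and only if {T \ {e} : T ∈ C} covers U \ {e}; in particular the minimum set cover sizes of S and of {T \ {e} : T ∈ S} (with universe U \ {e}) are equal. -/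
open Classical in
lemma erase_biUnion_key {α : Type*} [DecidableEq α] (C : Finset (Finset α)) (e : α) :
    (C.image (fun T => T.erase e)).biUnion id = (C.biUnion id).erase e := by
  ext a
  simp only [Finset.mem_biUnion, Finset.mem_image, Finset.mem_erase, id]
  constructor
  · rintro ⟨T', ⟨T, hT, rfl⟩, ha⟩
    exact ⟨(Finset.mem_erase.mp ha).1, T, hT, (Finset.mem_erase.mp ha).2⟩
  · rintro ⟨hne, T, hT, ha⟩
    exact ⟨T.erase e, ⟨T, hT, rfl⟩, Finset.mem_erase.mpr ⟨hne, ha⟩⟩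

/-- Subsumption rule correctness: if every set containing `e'` also contains `e`
(`e ≠ e'`), then `C ⊆ S` covers the universe iff `{T \ {e} : T ∈ C}` covers
`U \ {e}`; consequently, the minimum set cover sizes of `S` and of
`{T \ {e} : T ∈ S}` (with universe `U \ {e}`) coincide. -/
theorem stmt_2 {α : Type*} [DecidableEq α] (S : Finset (Finset α)) (e e' : α)
    (he : e ∈ S.biUnion id) (he' : e' ∈ S.biUnion id) (hne : e ≠ e')
    (hsub : ∀ T ∈ S, e' ∈ T → e ∈ T) :
    (∀ C ⊆ S, (C.biUnion id = S.biUnion id ↔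
      (C.image (fun T => T.erase e)).biUnion id = (S.biUnion id).erase e)) ∧
    sInf {n : ℕ | ∃ C ⊆ S, C.biUnion id = S.biUnion id ∧ C.card = n} =
      sInf {n : ℕ | ∃ C ⊆ S.image (fun T => T.erase e),
        C.biUnion id = (S.biUnion id).erase e ∧ C.card = n} := by
  classical
  have key : ∀ C ⊆ S, (C.biUnion id = S.biUnion id ↔
      (C.image (fun T => T.erase e)).biUnion id = (S.biUnion id).erase e) := by
    intro C hC
    rw [erase_biUnion_key]
    constructor
    · intro h; rw [h]
    · intro h
      apply subset_antisymm
      · exact Finset.biUnion_subset_biUnion_of_subset_left id hC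
      · intro a ha
        by_cases hae : a = e
        · have : e' ∈ (C.biUnion id).erase e := by
            rw [h]; exact Finset.mem_erase.mpr ⟨Ne.symm hne, he'⟩
          obtain ⟨T, hT, he'T⟩ := Finset.mem_biUnion.mp (Finset.mem_of_mem_erase this)
          rw [hae]
          exact Finset.mem_biUnion.mpr ⟨T, hT, hsub T (hC hT) he'T⟩
        · have : a ∈ (C.biUnion id).erase e := by
            rw [h]; exact Finset.mem_erase.mpr ⟨hae, ha⟩
          exact Finset.mem_of_mem_erase this
  refine ⟨key, le_antisymm ?_ ?_⟩
  · -- sInf LHS ≤ sInf RHS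
    have hRne : {n : ℕ | ∃ C ⊆ S.image (fun T => T.erase e),
        C.biUnion id = (S.biUnion id).erase e ∧ C.card = n}.Nonempty :=
      ⟨(S.image (fun T => T.erase e)).card, S.image _, subset_rfl,
        erase_biUnion_key S e, rfl⟩
    obtain ⟨C', hC'sub, hC'cov, hC'card⟩ := Nat.sInf_mem hRne
    -- build preimage cover
    set g : Finset α → Finset α := fun T' =>
      if h : ∃ T ∈ S, T.erase e = T' then h.choose else ∅ with hg
    have hgS : ∀ T' ∈ C', g T' ∈ S ∧ (g T').erase e = T' := by
      intro T' hT'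
      obtain ⟨T, hT, hTe⟩ := Finset.mem_image.mp (hC'sub hT')
      have hex : ∃ T ∈ S, T.erase e = T' := ⟨T, hT, hTe⟩
      simp only [hg, dif_pos hex]
      exact ⟨hex.choose_spec.1, hex.choose_spec.2⟩
    set C : Finset (Finset α) := C'.image g with hCdef
    have hCsub : C ⊆ S := by
      intro x hx
      obtain ⟨T', hT', rfl⟩ := Finset.mem_image.mp hx
      exact (hgS T' hT').1
    have hcov : (C.image (fun T => T.erase e)).biUnion id = (S.biUnion id).erase e := by
      rw [erase_biUnion_key]
      apply subset_antisymm
      · intro a ha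
        rw [Finset.mem_erase, Finset.mem_biUnion] at ha
        obtain ⟨hane, T, hT, haT⟩ := ha
        obtain ⟨T', hT', rfl⟩ := Finset.mem_image.mp hT
        have : a ∈ (g T').erase e := Finset.mem_erase.mpr ⟨hane, haT⟩
        rw [(hgS T' hT').2] at this
        rw [← hC'cov]
        exact Finset.mem_biUnion.mpr ⟨T', hT', this⟩
      · rw [← hC'cov]
        intro a ha
        obtain ⟨T', hT', haT'⟩ := Finset.mem_biUnion.mp ha
        have h1 : a ∈ (g T').erase e := by rw [(hgS T' hT').2]; exact haT'
        have h2 : g T' ∈ C := Finset.mem_image_of_mem g hT'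
        rw [Finset.mem_erase] at h1 ⊢
        exact ⟨h1.1, Finset.mem_biUnion.mpr ⟨g T', h2, h1.2⟩⟩
    have hCcov : C.biUnion id = S.biUnion id := (key C hCsub).mpr hcov
    calc sInf {n : ℕ | ∃ C ⊆ S, C.biUnion id = S.biUnion id ∧ C.card = n}
        ≤ C.card := Nat.sInf_le ⟨C, hCsub, hCcov, rfl⟩
      _ ≤ C'.card := Finset.card_image_le
      _ = _ := hC'card
  · -- sInf RHS ≤ sInf LHS
    have hLne : {n : ℕ | ∃ C ⊆ S, C.biUnion id = S.biUnion id ∧ C.card = n}.Nonempty :=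
      ⟨S.card, S, subset_rfl, rfl, rfl⟩
    obtain ⟨C, hCsub, hCcov, hCcard⟩ := Nat.sInf_mem hLne
    calc sInf {n : ℕ | ∃ C ⊆ S.image (fun T => T.erase e),
          C.biUnion id = (S.biUnion id).erase e ∧ C.card = n}
        ≤ (C.image (fun T => T.erase e)).card :=
          Nat.sInf_le ⟨C.image _, Finset.image_subset_image hCsub,
            (key C hCsub).mp hCcov, rfl⟩
      _ ≤ C.card := Finset.card_image_le
      _ = _ := hCcard
end

section
/- Unique element (singleton) rule correctness: Let S be a finite collection of finite sets with universe U, and suppose {e} ∈ S where e occurs in no other set of S (i.e., S(e) = {{e}}). Then every set cover of S contains {e}, and the minimum set cover size of S equals 1 plus the minimum set cover size of S \ {{e}} with universe U \ {e}. -/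
/-- Unique element (singleton) rule correctness: if `{e} ∈ S` and `e` occurs in no other
set of `S`, then every set cover of `S` contains `{e}`, and the minimum set cover size
of `S` is `1` plus that of `S \ {{e}}` with universe `U \ {e}`. -/
theorem stmt_3 {α : Type*} [DecidableEq α] (S : Finset (Finset α)) (e : α)
    (hsingleton : {e} ∈ S) (hunique : ∀ T ∈ S, e ∈ T → T = {e}) :
    (∀ C ⊆ S, C.biUnion id = S.biUnion id → ({e} : Finset α) ∈ C) ∧
    sInf {n : ℕ | ∃ C ⊆ S, C.biUnion id = S.biUnion id ∧ C.card = n} =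
      1 + sInf {n : ℕ | ∃ C ⊆ S.erase {e},
        C.biUnion id = (S.biUnion id).erase e ∧ C.card = n} := by
  have heU : e ∈ S.biUnion id :=
    Finset.mem_biUnion.mpr ⟨{e}, hsingleton, Finset.mem_singleton_self e⟩
  have hmem : ∀ C ⊆ S, C.biUnion id = S.biUnion id → ({e} : Finset α) ∈ C := by
    intro C hCS hcov
    have he : e ∈ C.biUnion id := by rw [hcov]; exact heU
    obtain ⟨T, hTC, heT⟩ := Finset.mem_biUnion.mp he
    have hT := hunique T (hCS hTC) heT
    rwa [← hT]
  have hbi : ∀ C : Finset (Finset α), C ⊆ S →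
      (C.erase {e}).biUnion id = (C.biUnion id).erase e := by
    intro C hCS
    ext x
    simp only [Finset.mem_biUnion, Finset.mem_erase, id]
    constructor
    · rintro ⟨T, ⟨hTne, hTC⟩, hxT⟩
      refine ⟨fun hx => hTne ?_, T, hTC, hxT⟩
      exact hunique T (hCS hTC) (hx ▸ hxT)
    · rintro ⟨hxe, T, hTC, hxT⟩
      refine ⟨T, ⟨fun h => hxe ?_, hTC⟩, hxT⟩
      subst h
      exact Finset.mem_singleton.mp hxT
  set A := {n : ℕ | ∃ C ⊆ S, C.biUnion id = S.biUnion id ∧ C.card = n} with hA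
  set B := {n : ℕ | ∃ C ⊆ S.erase {e},
      C.biUnion id = (S.biUnion id).erase e ∧ C.card = n} with hB
  have hAne : A.Nonempty := ⟨S.card, S, le_refl S, rfl, rfl⟩
  have hBne : B.Nonempty :=
    ⟨(S.erase {e}).card, S.erase {e}, le_refl _, hbi S (le_refl S), rfl⟩
  refine ⟨hmem, ?_⟩
  -- 1 + sInf B ∈ A
  obtain ⟨C, hC1, hC2, hC3⟩ := Nat.sInf_mem hBne
  have hnotmem : ({e} : Finset α) ∉ C := fun h =>
    (Finset.mem_erase.mp (hC1 h)).1 rfl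
  have h1 : 1 + sInf B ∈ A := by
    refine ⟨insert {e} C, ?_, ?_, ?_⟩
    · exact Finset.insert_subset hsingleton (hC1.trans (Finset.erase_subset _ _))
    · rw [Finset.biUnion_insert, hC2]
      ext x
      simp only [Finset.mem_union, Finset.mem_erase, id, Finset.mem_singleton]
      constructor
      · rintro (rfl | ⟨_, hx⟩)
        · exact heU
        · exact hx
      · intro hx
        by_cases hxe : x = e
        · exact Or.inl hxe
        · exact Or.inr ⟨hxe, hx⟩
    · rw [Finset.card_insert_of_notMem hnotmem, hC3]; omega
  -- sInf A - 1 ∈ B and sInf A ≥ 1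
  obtain ⟨D, hD1, hD2, hD3⟩ := Nat.sInf_mem hAne
  have heD : ({e} : Finset α) ∈ D := hmem D hD1 hD2
  have hpos : 1 ≤ sInf A := by
    rw [← hD3]
    exact Finset.card_pos.mpr ⟨{e}, heD⟩
  have h2 : sInf A - 1 ∈ B := by
    refine ⟨D.erase {e}, Finset.erase_subset_erase _ hD1, ?_, ?_⟩
    · rw [hbi D hD1, hD2]
    · rw [Finset.card_erase_of_mem heD, hD3]
  exact le_antisymm (Nat.sInf_le h1) (by have := Nat.sInf_le h2; omega)
end

section
/- Avoiding unnecessary branchings (Rule 6) correctness: Let S be a finite collection of finite sets with universe U in which all subset and subsumption reductions have been applied (no set is contained in another, and no two distinct elements e, e' satisfy S(e') ⊆ S(e)). Let S ∈ S, let R = {e ∈ S : f(e) = 2} with r₂ = |R|, and let M = (⋃_{e ∈ R} ⋃_{T ∈ S(e), T ≠ S} T) \ S with m = |M|. If m < r₂, then there exists a minimum set cover of S containing S. -/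
/-!
Take a minimum cover `C` avoiding `S₀`. Each `e ∈ R` lies in exactly one set of `C`, its
second occurrence, and by subsumption-freeness distinct elements of `R` have distinct second
occurrences, so at least `|R|` sets of `C` meet `R`. Replacing them by `S₀` together with one
set per element of `M` (which is all they cover outside `S₀`) costs at most `|M| + 1 ≤ |R|`
sets, so the new cover containing `S₀` is again minimum.
-/

namespace SetCover

open Finset

variable {α : Type*} [DecidableEq α]

def IsCover (S C : Finset (Finset α)) : Prop :=
  C ⊆ S ∧ C.biUnion id = S.biUnion id

def IsSubsumptionFree (S : Finset (Finset α)) : Prop :=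
  ∀ e ∈ S.biUnion id, ∀ e' ∈ S.biUnion id, e ≠ e' →
    ¬ (S.filter (fun T => e' ∈ T) ⊆ S.filter (fun T => e ∈ T))

theorem exists_isCover_forall_card_le (S : Finset (Finset α)) :
    ∃ C, IsCover S C ∧ ∀ C', IsCover S C' → #C ≤ #C' := by
  classical
  obtain ⟨C, hC, hmin⟩ := exists_min_image ((S.powerset).filter (IsCover S)) card
    ⟨S, mem_filter.mpr ⟨mem_powerset_self S, subset_rfl, rfl⟩⟩
  exact ⟨C, (mem_filter.mp hC).2,
    fun C' hC' => hmin C' (mem_filter.mpr ⟨mem_powerset.mpr hC'.1, hC'⟩)⟩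

theorem exists_subset_card_le_subset_biUnion {S : Finset (Finset α)} {X : Finset α}
    (hX : X ⊆ S.biUnion id) : ∃ A ⊆ S, #A ≤ #X ∧ X ⊆ A.biUnion id := by
  induction X using Finset.induction_on with
  | empty => exact ⟨∅, empty_subset S, le_rfl, empty_subset _⟩
  | insert x X hx ih =>
    obtain ⟨A, hAS, hAcard, hXA⟩ := ih ((subset_insert x X).trans hX)
    obtain ⟨T, hT, hxT⟩ := mem_biUnion.mp (hX (mem_insert_self x X))
    refine ⟨insert T A, insert_subset hT hAS, ?_, insert_subset ?_ (hXA.trans ?_)⟩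
    · rw [card_insert_of_notMem hx]
      exact (card_insert_le T A).trans (Nat.succ_le_succ hAcard)
    · exact mem_biUnion.mpr ⟨T, mem_insert_self T A, hxT⟩
    · exact biUnion_subset_biUnion_of_subset_left id (subset_insert T A)

/-- Exchange step: trading the sets of `D ⊆ C` for `S₀` plus one set per element that
`D` covers outside `S₀`. -/
theorem exists_isCover_mem_card_add_le {S C D : Finset (Finset α)} {S₀ : Finset α}
    (hS₀ : S₀ ∈ S) (hC : IsCover S C) (hD : D ⊆ C) :
    ∃ C', IsCover S C' ∧ S₀ ∈ C' ∧ #C' + #D ≤ #C + #(D.biUnion id \ S₀) + 1 := by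
  have hDS : D.biUnion id \ S₀ ⊆ S.biUnion id :=
    sdiff_subset.trans (hC.2 ▸ biUnion_subset_biUnion_of_subset_left id hD)
  obtain ⟨A, hAS, hAcard, hA⟩ := exists_subset_card_le_subset_biUnion hDS
  have hsub : insert S₀ (C \ D ∪ A) ⊆ S :=
    insert_subset hS₀ (union_subset (sdiff_subset.trans hC.1) hAS)
  refine ⟨insert S₀ (C \ D ∪ A), ⟨hsub, ?_⟩, mem_insert_self _ _, ?_⟩
  · refine (biUnion_subset_biUnion_of_subset_left id hsub).antisymm fun x hx => ?_
    rw [← hC.2] at hx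
    obtain ⟨B, hBC, hxB⟩ := mem_biUnion.mp hx
    rw [biUnion_insert, union_biUnion, mem_union, mem_union]
    by_cases hBD : B ∈ D
    · by_cases hxS₀ : x ∈ S₀
      · exact Or.inl hxS₀
      · exact Or.inr (Or.inr (hA (mem_sdiff.mpr ⟨mem_biUnion.mpr ⟨B, hBD, hxB⟩, hxS₀⟩)))
    · exact Or.inr (Or.inl (mem_biUnion.mpr ⟨B, mem_sdiff.mpr ⟨hBC, hBD⟩, hxB⟩))
  · calc #(insert S₀ (C \ D ∪ A)) + #D ≤ #(C \ D) + #A + 1 + #D := by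
          gcongr
          exact (card_insert_le _ _).trans (Nat.succ_le_succ (card_union_le _ _))
      _ ≤ #C + #(D.biUnion id \ S₀) + 1 := by
          rw [card_sdiff_of_subset hD]
          have := card_le_card hD
          omega

theorem filter_mem_eq_pair {S : Finset (Finset α)} {S₀ T : Finset α} {e : α}
    (hfreq : #(S.filter (fun U => e ∈ U)) = 2) (hS₀ : S₀ ∈ S) (he₀ : e ∈ S₀)
    (hT : T ∈ S) (he : e ∈ T) (hne : T ≠ S₀) :
    S.filter (fun U => e ∈ U) = {S₀, T} := by
  refine (eq_of_subset_of_card_le ?_ ?_).symm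
  · exact insert_subset (mem_filter.mpr ⟨hS₀, he₀⟩)
      (singleton_subset_iff.mpr (mem_filter.mpr ⟨hT, he⟩))
  · rw [hfreq, card_pair hne.symm]

theorem eq_of_mem_of_card_filter_eq_two {S : Finset (Finset α)} (hS : IsSubsumptionFree S)
    {S₀ T : Finset α} (hS₀ : S₀ ∈ S) (hT : T ∈ S) (hne : T ≠ S₀) {e e' : α}
    (he₀ : e ∈ S₀) (hfreq : #(S.filter (fun U => e ∈ U)) = 2) (he : e ∈ T)
    (he'₀ : e' ∈ S₀) (hfreq' : #(S.filter (fun U => e' ∈ U)) = 2) (he' : e' ∈ T) :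
    e = e' := by
  by_contra hee'
  refine hS e (mem_biUnion.mpr ⟨T, hT, he⟩) e' (mem_biUnion.mpr ⟨T, hT, he'⟩) hee' ?_
  rw [filter_mem_eq_pair hfreq hS₀ he₀ hT he hne,
    filter_mem_eq_pair hfreq' hS₀ he'₀ hT he' hne]

theorem card_le_card_filter_exists_mem {S C : Finset (Finset α)} (hS : IsSubsumptionFree S)
    {S₀ : Finset α} (hS₀ : S₀ ∈ S) (hC : IsCover S C) (hS₀C : S₀ ∉ C) {R : Finset α}
    (hR : ∀ e ∈ R, e ∈ S₀ ∧ #(S.filter (fun U => e ∈ U)) = 2) :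
    #R ≤ #(C.filter (fun T => ∃ e ∈ R, e ∈ T)) := by
  refine card_le_card_of_forall_subsingleton (fun e T => e ∈ T) (fun e he => ?_) ?_
  · have : e ∈ C.biUnion id := hC.2 ▸ mem_biUnion.mpr ⟨S₀, hS₀, (hR e he).1⟩
    obtain ⟨T, hT, heT⟩ := mem_biUnion.mp this
    exact ⟨T, mem_filter.mpr ⟨hT, e, he, heT⟩, heT⟩
  · intro T hT e ⟨he, heT⟩ e' ⟨he', he'T⟩
    have hTC := (mem_filter.mp hT).1
    exact eq_of_mem_of_card_filter_eq_two hS hS₀ (hC.1 hTC) (ne_of_mem_of_not_mem hTC hS₀C)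
      (hR e he).1 (hR e he).2 heT (hR e' he').1 (hR e' he').2 he'T

end SetCover

theorem stmt_5_general {α : Type*} [DecidableEq α] (S : Finset (Finset α)) (S₀ : Finset α)
    (hS₀ : S₀ ∈ S)
    (hnosubsumption : ∀ e ∈ S.biUnion id, ∀ e' ∈ S.biUnion id, e ≠ e' →
      ¬ (S.filter (fun T => e' ∈ T) ⊆ S.filter (fun T => e ∈ T)))
    (R M : Finset α)
    (hR : R = S₀.filter (fun e => (S.filter (fun T => e ∈ T)).card = 2))
    (hM : M = (R.biUnion (fun e => (S.filter (fun T => e ∈ T ∧ T ≠ S₀)).biUnion id)) \ S₀)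
    (hlt : M.card < R.card) :
    ∃ C ⊆ S, C.biUnion id = S.biUnion id ∧ S₀ ∈ C ∧
      ∀ C' ⊆ S, C'.biUnion id = S.biUnion id → C.card ≤ C'.card := by
  obtain ⟨C, hC, hmin⟩ := SetCover.exists_isCover_forall_card_le S
  by_cases hS₀C : S₀ ∈ C
  · exact ⟨C, hC.1, hC.2, hS₀C, fun C' h₁ h₂ => hmin C' ⟨h₁, h₂⟩⟩
  set D := C.filter (fun T => ∃ e ∈ R, e ∈ T)
  have hRD : R.card ≤ D.card :=
    SetCover.card_le_card_filter_exists_mem hnosubsumption hS₀ hC hS₀C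
      fun e he => by rw [hR] at he; exact Finset.mem_filter.mp he
  have hDM : D.biUnion id \ S₀ ⊆ M := by
    intro x hx
    obtain ⟨hxD, hxS₀⟩ := Finset.mem_sdiff.mp hx
    obtain ⟨T, hTD, hxT⟩ := Finset.mem_biUnion.mp hxD
    obtain ⟨hTC, e, he, heT⟩ := Finset.mem_filter.mp hTD
    have hTS₀ : T ≠ S₀ := ne_of_mem_of_not_mem hTC hS₀C
    rw [hM]
    simp only [Finset.mem_sdiff, Finset.mem_biUnion, Finset.mem_filter, id]
    exact ⟨⟨e, he, T, ⟨hC.1 hTC, heT, hTS₀⟩, hxT⟩, hxS₀⟩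
  obtain ⟨C', hC', hS₀C', hcard⟩ :=
    SetCover.exists_isCover_mem_card_add_le (D := D) hS₀ hC (Finset.filter_subset _ C)
  refine ⟨C', hC'.1, hC'.2, hS₀C', fun C'' h₁ h₂ => ?_⟩
  have := hmin C'' ⟨h₁, h₂⟩
  have := Finset.card_le_card hDM
  omega

/-- Rule 6 (avoiding unnecessary branchings) correctness: in a subset- and
subsumption-reduced instance, if the set `M` of new elements in the second-occurrence
sets of the frequency-two elements `R` of `S₀` satisfies `|M| < |R|`, then some minimum
set cover contains `S₀`. -/
theorem stmt_5 {α : Type*} [DecidableEq α] (S : Finset (Finset α)) (S₀ : Finset α)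
    (hS₀ : S₀ ∈ S)
    (hnosub : ∀ T₁ ∈ S, ∀ T₂ ∈ S, T₁ ⊆ T₂ → T₁ = T₂)
    (hnosubsumption : ∀ e ∈ S.biUnion id, ∀ e' ∈ S.biUnion id, e ≠ e' →
      ¬ (S.filter (fun T => e' ∈ T) ⊆ S.filter (fun T => e ∈ T)))
    (R M : Finset α)
    (hR : R = S₀.filter (fun e => (S.filter (fun T => e ∈ T)).card = 2))
    (hM : M = (R.biUnion (fun e => (S.filter (fun T => e ∈ T ∧ T ≠ S₀)).biUnion id)) \ S₀)
    (hlt : M.card < R.card) :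
    ∃ C ⊆ S, C.biUnion id = S.biUnion id ∧ S₀ ∈ C ∧
      ∀ C' ⊆ S, C'.biUnion id = S.biUnion id → C.card ≤ C'.card :=
  stmt_5_general S S₀ hS₀ hnosubsumption R M hR hM hlt
end

section
/- Every set cover of a subsumption- and subset-reduced instance that excludes a set S must include, for each frequency-2 element e ∈ S, the unique other set containing e; hence if S has r₂ frequency-2 elements, any set cover avoiding S contains at least r₂ sets other than S. -/
/-! An element `e ∈ S₀` of frequency 2 lies in exactly one set `T ≠ S₀`; a cover avoiding `S₀`
must contain `T`. Two frequency-2 elements of `S₀` sharing that other set would have the same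
occurrence set `{S₀, T}`, which subsumption-reducedness forbids, so each set of the cover accounts
for at most one of them. -/

theorem Finset.eq_pair_of_card_eq_two {β : Type*} [DecidableEq β] {s : Finset β} {a b : β}
    (hs : s.card = 2) (ha : a ∈ s) (hb : b ∈ s) (hab : a ≠ b) : s = {a, b} :=
  (Finset.eq_of_subset_of_card_le (Finset.insert_subset ha (Finset.singleton_subset_iff.2 hb))
    (by rw [hs, Finset.card_pair hab])).symm

section FrequencyTwo

variable {α : Type*} [DecidableEq α] {S : Finset (Finset α)} {S₀ T U : Finset α} {e e' : α}

theorem filter_mem_eq_pair_of_card_eq_two (hS₀ : S₀ ∈ S) (he : e ∈ S₀)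
    (hcard : (S.filter (e ∈ ·)).card = 2) (hT : T ∈ S) (heT : e ∈ T) (hTS₀ : T ≠ S₀) :
    S.filter (e ∈ ·) = {S₀, T} :=
  Finset.eq_pair_of_card_eq_two hcard (Finset.mem_filter.2 ⟨hS₀, he⟩)
    (Finset.mem_filter.2 ⟨hT, heT⟩) hTS₀.symm

theorem eq_of_mem_of_card_filter_mem_eq_two (hS₀ : S₀ ∈ S) (he : e ∈ S₀)
    (hcard : (S.filter (e ∈ ·)).card = 2) (hT : T ∈ S) (heT : e ∈ T) (hTS₀ : T ≠ S₀)
    (hU : U ∈ S) (heU : e ∈ U) (hUS₀ : U ≠ S₀) : U = T := by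
  have hUpair : U ∈ ({S₀, T} : Finset (Finset α)) := by
    rw [← filter_mem_eq_pair_of_card_eq_two hS₀ he hcard hT heT hTS₀]
    exact Finset.mem_filter.2 ⟨hU, heU⟩
  simpa [hUS₀] using hUpair

theorem filter_mem_eq_of_card_filter_mem_eq_two (hS₀ : S₀ ∈ S) (hT : T ∈ S) (hTS₀ : T ≠ S₀)
    (he : e ∈ S₀) (heT : e ∈ T) (hcard : (S.filter (e ∈ ·)).card = 2)
    (he' : e' ∈ S₀) (he'T : e' ∈ T) (hcard' : (S.filter (e' ∈ ·)).card = 2) :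
    S.filter (e ∈ ·) = S.filter (e' ∈ ·) := by
  rw [filter_mem_eq_pair_of_card_eq_two hS₀ he hcard hT heT hTS₀,
    filter_mem_eq_pair_of_card_eq_two hS₀ he' hcard' hT he'T hTS₀]

end FrequencyTwo

theorem stmt_18_general {α : Type*} [DecidableEq α] (S : Finset (Finset α)) (S₀ : Finset α)
    (hS₀ : S₀ ∈ S)
    (hnosubsumption : ∀ e ∈ S.biUnion id, ∀ e' ∈ S.biUnion id, e ≠ e' →
      ¬ (S.filter (fun T => e' ∈ T) ⊆ S.filter (fun T => e ∈ T))) :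
    ∀ C ⊆ S, C.biUnion id = S.biUnion id → S₀ ∉ C →
      (∀ e ∈ S₀, (S.filter (fun T => e ∈ T)).card = 2 →
        ∀ T ∈ S, e ∈ T → T ≠ S₀ → T ∈ C) ∧
      (S₀.filter (fun e => (S.filter (fun T => e ∈ T)).card = 2)).card ≤ C.card := by
  intro C hCS hcov hS₀C
  have hmem_univ : ∀ e ∈ S₀, e ∈ S.biUnion id := fun e he => Finset.mem_biUnion.2 ⟨S₀, hS₀, he⟩
  have hcovered : ∀ e ∈ S₀, ∃ U ∈ C, e ∈ U := fun e he => by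
    simpa [← hcov] using hmem_univ e he
  have hne_of_mem : ∀ U ∈ C, U ≠ S₀ := fun U hU h => hS₀C (h ▸ hU)
  refine ⟨fun e he hcard T hT heT hTS₀ => ?_, ?_⟩
  · obtain ⟨U, hUC, heU⟩ := hcovered e he
    rwa [← eq_of_mem_of_card_filter_mem_eq_two hS₀ he hcard hT heT hTS₀ (hCS hUC) heU
      (hne_of_mem U hUC)]
  · refine Finset.card_le_card_of_forall_subsingleton (· ∈ ·)
      (fun e he => hcovered e (Finset.mem_filter.1 he).1) fun T hT e he e' he' => ?_
    obtain ⟨⟨he, hcard⟩, heT⟩ : (e ∈ S₀ ∧ _) ∧ e ∈ T := by simpa using he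
    obtain ⟨⟨he', hcard'⟩, he'T⟩ : (e' ∈ S₀ ∧ _) ∧ e' ∈ T := by simpa using he'
    by_contra hee'
    exact hnosubsumption e (hmem_univ e he) e' (hmem_univ e' he') hee'
      (filter_mem_eq_of_card_filter_mem_eq_two hS₀ (hCS hT) (hne_of_mem T hT)
        he heT hcard he' he'T hcard').ge

/-- In a subset- and subsumption-reduced instance, any set cover `C` avoiding `S₀`
contains, for each frequency-2 element `e ∈ S₀`, the unique other set containing `e`;
hence `C` contains at least `r₂` sets other than `S₀`, where `r₂` is the number of
frequency-2 elements of `S₀`. -/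
theorem stmt_18 {α : Type*} [DecidableEq α] (S : Finset (Finset α)) (S₀ : Finset α)
    (hS₀ : S₀ ∈ S)
    (hnosub : ∀ T₁ ∈ S, ∀ T₂ ∈ S, T₁ ⊆ T₂ → T₁ = T₂)
    (hnosubsumption : ∀ e ∈ S.biUnion id, ∀ e' ∈ S.biUnion id, e ≠ e' →
      ¬ (S.filter (fun T => e' ∈ T) ⊆ S.filter (fun T => e ∈ T))) :
    ∀ C ⊆ S, C.biUnion id = S.biUnion id → S₀ ∉ C →
      (∀ e ∈ S₀, (S.filter (fun T => e ∈ T)).card = 2 →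
        ∀ T ∈ S, e ∈ T → T ≠ S₀ → T ∈ C) ∧
      (S₀.filter (fun e => (S.filter (fun T => e ∈ T)).card = 2)).card ≤ C.card :=
  stmt_18_general S S₀ hS₀ hnosubsumption
end
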